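/- Let (Ω, F₀, P) be a probability space, m, ℓ ∈ ℕ with ℓ ≥ 1, λ positive weights on ℝ^m, and Y : Ω → ℝ^m measurable with E[‖Y‖_λ²] < ∞. Suppose Γ* = (γ*₁,…,γ*_ℓ) ∈ (ℝ^m)^ℓ minimizes the quantization error e(Γ) over all tuples Γ ∈ (ℝ^m)^ℓ. Then for every index i ∈ {1,…,ℓ} such that P(q_{Γ*}(Y) = γ*ᵢ) > 0, the conditional mean of Y on the Voronoi cell of γ*ᵢ equals γ*ᵢ: E[Y · 1{q_{Γ*}(Y) = γ*ᵢ}] / P(q_{Γ*}(Y) = γ*ᵢ) = γ*ᵢ. -/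

import Mathlib

open MeasureTheory Finset

noncomputable section

/-- The weighted inner product `⟨y,y'⟩_λ = ∑ i, λᵢ yᵢ y'ᵢ` on `ℝ^m`. -/
def wip {m : ℕ} (lam : Fin m → ℝ) (y y' : Fin m → ℝ) : ℝ := ∑ i, lam i * y i * y' i

/-- The squared weighted norm `‖y‖_λ²`. -/
def wnormSq {m : ℕ} (lam : Fin m → ℝ) (y : Fin m → ℝ) : ℝ := wip lam y y

/-- The weighted norm `‖y‖_λ`. -/
def wnorm {m : ℕ} (lam : Fin m → ℝ) (y : Fin m → ℝ) : ℝ := Real.sqrt (wnormSq lam y)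

/-- The set of indices minimizing `‖y - γᵢ‖_λ`. -/
def minimizers {m ℓ : ℕ} (lam : Fin m → ℝ) (Γ : Fin ℓ → Fin m → ℝ) (y : Fin m → ℝ) :
    Finset (Fin ℓ) :=
  Finset.univ.filter fun i => ∀ j, wnorm lam (y - Γ i) ≤ wnorm lam (y - Γ j)

lemma minimizers_nonempty {m ℓ : ℕ} [NeZero ℓ] (lam : Fin m → ℝ) (Γ : Fin ℓ → Fin m → ℝ)
    (y : Fin m → ℝ) : (minimizers lam Γ y).Nonempty := by
  obtain ⟨i, -, hi⟩ := Finset.exists_min_image Finset.univ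
    (fun i => wnorm lam (y - Γ i)) ⟨0, Finset.mem_univ _⟩
  exact ⟨i, by simpa [minimizers] using fun j => hi j (Finset.mem_univ j)⟩

/-- The nearest-prototype map `q_Γ`: sends `y` to `γ_{i(y)}` where `i(y)` is the smallest
index minimizing `‖y - γᵢ‖_λ`. -/
def q {m ℓ : ℕ} [NeZero ℓ] (lam : Fin m → ℝ) (Γ : Fin ℓ → Fin m → ℝ) (y : Fin m → ℝ) :
    Fin m → ℝ :=
  Γ ((minimizers lam Γ y).min' (minimizers_nonempty lam Γ y))

/-- The quantization error `e(Γ) = (E[minᵢ ‖Y - γᵢ‖_λ²])^{1/2}`. -/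
def quantErr {m ℓ : ℕ} [NeZero ℓ] (lam : Fin m → ℝ) (Γ : Fin ℓ → Fin m → ℝ)
    {Ω : Type*} [MeasurableSpace Ω] (μ : Measure Ω) (Y : Ω → Fin m → ℝ) : ℝ :=
  Real.sqrt (∫ ω, ⨅ i, (wnorm lam (Y ω - Γ i)) ^ 2 ∂μ)

/-!
Weighting the coordinates by `√λₖ` turns `‖·‖_λ` into the Euclidean norm, so we may work in a
real inner product space. If `b` is the mean of `Y` over the cell `A` of `γᵢ`, then
`E[‖Y - γᵢ‖²; A] = E[‖Y - b‖²; A] + P(A) ‖b - γᵢ‖²`. Replacing `γᵢ` by `b` therefore lowers the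
error on `A` by `P(A) ‖b - γᵢ‖²` and does not raise it off `A`, where another prototype is
nearest; optimality of `Γ*` forces `b = γᵢ`.
-/

open scoped InnerProductSpace

section Distortion

variable {Ω E ι : Type*} [MeasurableSpace Ω] {μ : Measure Ω} [NormedAddCommGroup E]

def distortion (μ : Measure Ω) (Z : Ω → E) (Γ : ι → E) : ℝ :=
  ∫ ω, ⨅ j, ‖Z ω - Γ j‖ ^ 2 ∂μ

lemma distortion_nonneg (Z : Ω → E) (Γ : ι → E) : 0 ≤ distortion μ Z Γ :=
  integral_nonneg fun _ => Real.iInf_nonneg fun _ => sq_nonneg _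

lemma integrable_norm_sub_sq [IsFiniteMeasure μ] {Z : Ω → E} (hZ : MemLp Z 2 μ) (c : E) :
    Integrable (fun ω => ‖Z ω - c‖ ^ 2) μ :=
  (memLp_two_iff_integrable_sq_norm (hZ.sub (memLp_const c)).1).1 (hZ.sub (memLp_const c))

lemma integrable_iInf_norm_sub_sq [IsFiniteMeasure μ] [Finite ι] [Nonempty ι] {Z : Ω → E}
    (hZ : MemLp Z 2 μ) (Γ : ι → E) : Integrable (fun ω => ⨅ j, ‖Z ω - Γ j‖ ^ 2) μ := by
  obtain ⟨j₀⟩ := ‹Nonempty ι›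
  refine (integrable_norm_sub_sq hZ (Γ j₀)).mono'
    (AEMeasurable.iInf fun j => ((hZ.sub (memLp_const (Γ j))).1.norm.pow 2).aemeasurable
      ).aestronglyMeasurable (ae_of_all _ fun ω => ?_)
  rw [Real.norm_of_nonneg (Real.iInf_nonneg fun j => sq_nonneg _)]
  exact ciInf_le (Finite.bddBelow_range _) j₀

variable [InnerProductSpace ℝ E]

lemma setIntegral_norm_sub_sq_sub_norm_sub_sq [CompleteSpace E] {Z : Ω → E} {A : Set Ω}
    {b c : E} (hZ : IntegrableOn Z A μ) (hA : μ A ≠ ⊤)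
    (hb : ∫ ω in A, Z ω ∂μ = μ.real A • b) :
    ∫ ω in A, (‖Z ω - c‖ ^ 2 - ‖Z ω - b‖ ^ 2) ∂μ = μ.real A * ‖b - c‖ ^ 2 := by
  have hexpand (z : E) :
      ‖z - c‖ ^ 2 - ‖z - b‖ ^ 2 = 2 * ⟪b - c, z⟫_ℝ + (‖c‖ ^ 2 - ‖b‖ ^ 2) := by
    rw [norm_sub_sq_real, norm_sub_sq_real, inner_sub_left, real_inner_comm z b,
      real_inner_comm z c]
    ring
  have : IsFiniteMeasure (μ.restrict A) := isFiniteMeasure_restrict.2 hA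
  simp_rw [hexpand]
  rw [integral_add ((hZ.const_inner _).const_mul 2) (integrable_const _), integral_const_mul,
    integral_inner hZ, hb, setIntegral_const, smul_eq_mul, inner_smul_right, inner_sub_left,
    norm_sub_sq_real, real_inner_self_eq_norm_sq, real_inner_comm c b]
  ring

theorem setAverage_eq_of_forall_distortion_le [CompleteSpace E] [IsFiniteMeasure μ] [Finite ι]
    {Z : Ω → E} (hZ : MemLp Z 2 μ) {Γ : ι → E}
    (hopt : ∀ Γ' : ι → E, distortion μ Z Γ ≤ distortion μ Z Γ') {i : ι} {A : Set Ω}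
    (hA : MeasurableSet A) (hA₀ : μ A ≠ 0)
    (hnear : ∀ ω ∈ A, ∀ j, ‖Z ω - Γ i‖ ≤ ‖Z ω - Γ j‖)
    (hfar : ∀ ω ∉ A, ∃ j ≠ i, ∀ k, ‖Z ω - Γ j‖ ≤ ‖Z ω - Γ k‖) :
    ⨍ ω in A, Z ω ∂μ = Γ i := by
  classical
  have : Nonempty ι := ⟨i⟩
  set b := ⨍ ω in A, Z ω ∂μ
  have hb : ∫ ω in A, Z ω ∂μ = μ.real A • b :=
    (measure_smul_setAverage _ (measure_ne_top μ A)).symm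
  set Γ' := Function.update Γ i b
  set gain := fun ω => ‖Z ω - Γ i‖ ^ 2 - ‖Z ω - b‖ ^ 2
  have hpointwise (ω : Ω) :
      ⨅ j, ‖Z ω - Γ' j‖ ^ 2 ≤ (⨅ j, ‖Z ω - Γ j‖ ^ 2) - A.indicator gain ω := by
    have hbdd (Γ : ι → E) : BddBelow (Set.range fun j => ‖Z ω - Γ j‖ ^ 2) :=
      Finite.bddBelow_range _
    by_cases hω : ω ∈ A
    · have : ⨅ j, ‖Z ω - Γ j‖ ^ 2 = ‖Z ω - Γ i‖ ^ 2 :=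
        le_antisymm (ciInf_le (hbdd Γ) i) (le_ciInf fun j => by gcongr; exact hnear ω hω j)
      rw [Set.indicator_of_mem hω, this]
      simpa [gain, Γ'] using ciInf_le (hbdd Γ') i
    · obtain ⟨j, hji, hj⟩ := hfar ω hω
      have : ⨅ k, ‖Z ω - Γ k‖ ^ 2 = ‖Z ω - Γ j‖ ^ 2 :=
        le_antisymm (ciInf_le (hbdd Γ) j) (le_ciInf fun k => by gcongr; exact hj k)
      rw [Set.indicator_of_notMem hω, this, sub_zero]
      simpa [Γ', hji] using ciInf_le (hbdd Γ') j
  have hgain : Integrable gain μ :=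
    (integrable_norm_sub_sq hZ _).sub (integrable_norm_sub_sq hZ _)
  have hdistortion : distortion μ Z Γ' ≤ distortion μ Z Γ - ∫ ω in A, gain ω ∂μ := by
    rw [distortion, distortion, ← integral_indicator hA,
      ← integral_sub (integrable_iInf_norm_sub_sq hZ Γ) (hgain.indicator hA)]
    exact integral_mono (integrable_iInf_norm_sub_sq hZ Γ')
      ((integrable_iInf_norm_sub_sq hZ Γ).sub (hgain.indicator hA)) hpointwise
  have hgain_nonpos : μ.real A * ‖b - Γ i‖ ^ 2 ≤ 0 := by
    rw [← setIntegral_norm_sub_sq_sub_norm_sub_sq (hZ.integrable one_le_two).integrableOn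
      (measure_ne_top μ A) hb]
    linarith [hopt Γ']
  have hμA : 0 < μ.real A := ENNReal.toReal_pos hA₀ (measure_ne_top μ A)
  have : ‖b - Γ i‖ ^ 2 = 0 :=
    le_antisymm (nonpos_of_mul_nonpos_right hgain_nonpos hμA) (sq_nonneg _)
  simpa [sub_eq_zero] using this

end Distortion

section Weighted

variable {m ℓ : ℕ} {lam : Fin m → ℝ}

def weightEquiv (hlam : ∀ k, 0 < lam k) : (Fin m → ℝ) ≃L[ℝ] EuclideanSpace ℝ (Fin m) :=
  ((LinearEquiv.piCongrRight fun k =>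
      LinearEquiv.smulOfNeZero ℝ ℝ (√(lam k)) (Real.sqrt_pos.2 (hlam k)).ne').trans
    (WithLp.linearEquiv 2 ℝ (Fin m → ℝ)).symm).toContinuousLinearEquiv

lemma weightEquiv_apply (hlam : ∀ k, 0 < lam k) (y : Fin m → ℝ) (k : Fin m) :
    weightEquiv hlam y k = √(lam k) * y k :=
  rfl

lemma sq_norm_weightEquiv (hlam : ∀ k, 0 < lam k) (y : Fin m → ℝ) :
    ‖weightEquiv hlam y‖ ^ 2 = wnormSq lam y := by
  rw [EuclideanSpace.real_norm_sq_eq, wnormSq, wip]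
  refine sum_congr rfl fun k _ => ?_
  rw [weightEquiv_apply, mul_pow, Real.sq_sqrt (hlam k).le]
  ring

lemma norm_weightEquiv (hlam : ∀ k, 0 < lam k) (y : Fin m → ℝ) :
    ‖weightEquiv hlam y‖ = wnorm lam y := by
  rw [wnorm, ← sq_norm_weightEquiv hlam, Real.sqrt_sq (norm_nonneg _)]

lemma memLp_weightEquiv_comp {Ω : Type*} [MeasurableSpace Ω] {μ : Measure Ω}
    (hlam : ∀ k, 0 < lam k) {Y : Ω → Fin m → ℝ} (hY : Measurable Y)
    (hY2 : Integrable (fun ω => wnormSq lam (Y ω)) μ) :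
    MemLp (fun ω => weightEquiv hlam (Y ω)) 2 μ :=
  (memLp_two_iff_integrable_sq_norm
    ((weightEquiv hlam).continuous.measurable.comp hY).aestronglyMeasurable).2
    (by simpa only [Function.comp_apply, sq_norm_weightEquiv] using hY2)

lemma quantErr_eq_sqrt_distortion [NeZero ℓ] {Ω : Type*} [MeasurableSpace Ω]
    (μ : Measure Ω) (hlam : ∀ k, 0 < lam k) (Γ : Fin ℓ → Fin m → ℝ) (Y : Ω → Fin m → ℝ) :
    quantErr lam Γ μ Y =
      √(distortion μ (fun ω => weightEquiv hlam (Y ω)) fun j => weightEquiv hlam (Γ j)) := by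
  simp only [quantErr, distortion, ← map_sub, norm_weightEquiv]

lemma distortion_le_of_forall_quantErr_le [NeZero ℓ] {Ω : Type*} [MeasurableSpace Ω]
    {μ : Measure Ω} (hlam : ∀ k, 0 < lam k) {Y : Ω → Fin m → ℝ} {Γs : Fin ℓ → Fin m → ℝ}
    (hopt : ∀ Γ : Fin ℓ → Fin m → ℝ, quantErr lam Γs μ Y ≤ quantErr lam Γ μ Y)
    (Γ' : Fin ℓ → EuclideanSpace ℝ (Fin m)) :
    distortion μ (fun ω => weightEquiv hlam (Y ω)) (fun j => weightEquiv hlam (Γs j)) ≤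
      distortion μ (fun ω => weightEquiv hlam (Y ω)) Γ' := by
  have h := hopt fun j => (weightEquiv hlam).symm (Γ' j)
  simp only [quantErr_eq_sqrt_distortion μ hlam, ContinuousLinearEquiv.apply_symm_apply] at h
  exact (Real.sqrt_le_sqrt_iff (distortion_nonneg _ _)).1 h

lemma exists_q_eq_and_forall_wnorm_le [NeZero ℓ] (lam : Fin m → ℝ) (Γ : Fin ℓ → Fin m → ℝ)
    (y : Fin m → ℝ) : ∃ j, q lam Γ y = Γ j ∧ ∀ k, wnorm lam (y - Γ j) ≤ wnorm lam (y - Γ k) :=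
  ⟨_, rfl, (mem_filter.1 (min'_mem _ (minimizers_nonempty lam Γ y))).2⟩

lemma norm_weightEquiv_sub_le_of_q_eq [NeZero ℓ] (hlam : ∀ k, 0 < lam k)
    {Γ : Fin ℓ → Fin m → ℝ} {y : Fin m → ℝ} {i : Fin ℓ} (hy : q lam Γ y = Γ i) (j : Fin ℓ) :
    ‖weightEquiv hlam y - weightEquiv hlam (Γ i)‖ ≤
      ‖weightEquiv hlam y - weightEquiv hlam (Γ j)‖ := by
  obtain ⟨k, hk, hmin⟩ := exists_q_eq_and_forall_wnorm_le lam Γ y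
  simpa only [← map_sub, norm_weightEquiv, ← hy, hk] using hmin j

lemma exists_ne_forall_norm_weightEquiv_sub_le_of_q_ne [NeZero ℓ] (hlam : ∀ k, 0 < lam k)
    {Γ : Fin ℓ → Fin m → ℝ} {y : Fin m → ℝ} {i : Fin ℓ} (hy : q lam Γ y ≠ Γ i) :
    ∃ j ≠ i, ∀ k, ‖weightEquiv hlam y - weightEquiv hlam (Γ j)‖ ≤
      ‖weightEquiv hlam y - weightEquiv hlam (Γ k)‖ := by
  obtain ⟨j, hj, hmin⟩ := exists_q_eq_and_forall_wnorm_le lam Γ y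
  refine ⟨j, fun hji => hy (hj.trans (congrArg Γ hji)), fun k => ?_⟩
  simpa only [← map_sub, norm_weightEquiv] using hmin k

lemma measurable_q [NeZero ℓ] (lam : Fin m → ℝ) (Γ : Fin ℓ → Fin m → ℝ) :
    Measurable (q lam Γ) := by
  have hmem (j : Fin ℓ) : Measurable fun y => j ∈ minimizers lam Γ y := by
    simp only [minimizers, mem_filter, mem_univ, true_and]
    refine Measurable.forall fun k => measurableSet_setOfPred.1 (measurableSet_le ?_ ?_) <;>
      · simp only [wnorm, wnormSq, wip, Pi.sub_apply]; fun_prop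
  refine measurable_from_top.comp (measurable_to_countable' fun k => ?_)
  simp_rw [Set.preimage, Set.mem_singleton_iff, min'_eq_iff]
  exact measurableSet_setOfPred.2
    ((hmem k).and (Measurable.forall fun j => (hmem j).imp measurable_const))

end Weighted

/-- **Optimal quantization: centroid property.** If `Γ*` minimizes the quantization error,
then for every cell of positive probability, the conditional mean of `Y` on the Voronoi
cell of `γ*ᵢ` equals `γ*ᵢ`. -/
theorem optimal_quantization_centroid
    {Ω : Type*} [MeasurableSpace Ω] (μ : Measure Ω) [IsProbabilityMeasure μ]
    {m ℓ : ℕ} [NeZero ℓ] (lam : Fin m → ℝ) (hlam : ∀ i, 0 < lam i)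
    (Y : Ω → Fin m → ℝ) (hYmeas : Measurable Y)
    (hY2 : Integrable (fun ω => wnormSq lam (Y ω)) μ)
    (Γs : Fin ℓ → Fin m → ℝ)
    (hopt : ∀ Γ : Fin ℓ → Fin m → ℝ, quantErr lam Γs μ Y ≤ quantErr lam Γ μ Y)
    (i : Fin ℓ) (hpos : 0 < μ {ω | q lam Γs (Y ω) = Γs i}) :
    (μ {ω | q lam Γs (Y ω) = Γs i}).toReal⁻¹ •
      (∫ ω in {ω | q lam Γs (Y ω) = Γs i}, Y ω ∂μ) = Γs i := by
  have hA : MeasurableSet {ω | q lam Γs (Y ω) = Γs i} :=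
    (measurable_q lam Γs).comp hYmeas (measurableSet_singleton _)
  have hcentroid := setAverage_eq_of_forall_distortion_le
    (memLp_weightEquiv_comp hlam hYmeas hY2) (distortion_le_of_forall_quantErr_le hlam hopt)
    hA hpos.ne' (fun _ hω => norm_weightEquiv_sub_le_of_q_eq hlam hω)
    (fun _ hω => exists_ne_forall_norm_weightEquiv_sub_le_of_q_ne hlam hω)
  rw [← Measure.real, ← setAverage_eq]
  apply (weightEquiv hlam).injective
  rw [← hcentroid]
  exact ((weightEquiv hlam).integral_comp_comm _).symm
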